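/- Let n, d, β be natural numbers and ε1, ε2, δ nonnegative reals. Suppose A is an (ε1,ε2,δ,β)-differentially private subset-retrieval algorithm on a ground set V of size n with hidden subsets of size d, such that for every d-subset e the distribution A(e) is supported on subsets of size exactly d. Define A' by A'(e) = pushforward of A(e) under the map s ↦ (s if d(s,e) ≤ β, else e). Then A' is a (0, 0, δ + 2·ε1 + (exp(ε2) − 1), β)-differentially private subset-retrieval algorithm, and for every d-subset e the distribution A'(e) is supported on subsets of size exactly d. -/

import Mathlib

open scoped ENNReal

/-- Distance between two finite sets: `d(e,f) = max(|e \ f|, |f \ e|)`. -/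
def setDist {γ : Type*} [DecidableEq γ] (e f : Finset γ) : ℕ :=
  max (e \ f).card (f \ e).card

/-- Probability that a sample from the PMF `μ` lands in the set `S`. -/
noncomputable def pr {γ : Type*} (μ : PMF γ) (S : Set γ) : ℝ :=
  (μ.toOuterMeasure S).toReal

/-- `A` is an `(ε1, ε2, δ, β)_{n,d}` differentially-private solution to the
subset-retrieval problem. -/
def IsDP (n d β : ℕ) (ε1 ε2 δ : ℝ)
    (A : Finset (Fin n) → PMF (Finset (Fin n))) : Prop :=
  (∀ e : Finset (Fin n), e.card = d →
      pr (A e) {s | setDist s e ≤ β} ≥ 1 - ε1) ∧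
  (∀ ei ej : Finset (Fin n), ei.card = d → ej.card = d → setDist ei ej = 1 →
      ∀ S : Set (Finset (Fin n)),
        pr (A ei) S ≤ Real.exp ε2 * pr (A ej) S + δ)

/-!
Clamping a sample to the ball of radius `β` around the input makes `A'` always accurate.
For privacy, the clamp is the identity on the ball `B` around `e_i`, which `A(e_i)` misses
with probability at most `ε1`, so `Pr[A'(e_i) ∈ S] ≤ Pr[A(e_i) ∈ S ∩ B] + ε1`. Privacy of `A`
applied to `S ∩ B` and `exp ε2 · p ≤ p + (exp ε2 - 1)` for `p ≤ 1` turn the multiplicative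
loss into an additive one, and returning from `A(e_j)` to `A'(e_j)` costs another `ε1`.
-/

open Set

section Probability

variable {α β : Type*} (μ : PMF α)

lemma PMF.toOuterMeasure_apply_ne_top (S : Set α) : μ.toOuterMeasure S ≠ ∞ := by
  rw [PMF.toOuterMeasure_apply]
  exact μ.tsum_coe_indicator_ne_top S

lemma pr_mono {S T : Set α} (h : S ⊆ T) : pr μ S ≤ pr μ T :=
  ENNReal.toReal_mono (μ.toOuterMeasure_apply_ne_top T) (μ.toOuterMeasure.mono h)

lemma pr_union_le (S T : Set α) : pr μ (S ∪ T) ≤ pr μ S + pr μ T := by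
  have hS := μ.toOuterMeasure_apply_ne_top S
  have hT := μ.toOuterMeasure_apply_ne_top T
  rw [pr, pr, pr, ← ENNReal.toReal_add hS hT]
  exact ENNReal.toReal_mono (ENNReal.add_ne_top.2 ⟨hS, hT⟩)
    (MeasureTheory.measure_union_le S T)

lemma pr_le_pr_inter_add_pr_compl (S B : Set α) : pr μ S ≤ pr μ (S ∩ B) + pr μ Bᶜ :=
  calc pr μ S ≤ pr μ (S ∩ B ∪ Bᶜ) := pr_mono μ fun x hx => by by_cases hB : x ∈ B <;> simp_all
    _ ≤ pr μ (S ∩ B) + pr μ Bᶜ := pr_union_le μ _ _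

lemma pr_add_pr_compl (S : Set α) : pr μ S + pr μ Sᶜ = 1 := by
  have h : μ.toOuterMeasure S + μ.toOuterMeasure Sᶜ = 1 := by
    rw [PMF.toOuterMeasure_apply, PMF.toOuterMeasure_apply, ← ENNReal.tsum_add, ← μ.tsum_coe]
    exact tsum_congr fun x => by by_cases h : x ∈ S <;> simp [h]
  rw [pr, pr, ← ENNReal.toReal_add (μ.toOuterMeasure_apply_ne_top S)
    (μ.toOuterMeasure_apply_ne_top Sᶜ), h, ENNReal.toReal_one]

lemma pr_compl_le {S : Set α} {ε : ℝ} (h : pr μ S ≥ 1 - ε) : pr μ Sᶜ ≤ ε := by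
  linarith [pr_add_pr_compl μ S]

lemma pr_nonneg (S : Set α) : 0 ≤ pr μ S :=
  ENNReal.toReal_nonneg

lemma pr_le_one (S : Set α) : pr μ S ≤ 1 := by
  linarith [pr_add_pr_compl μ S, pr_nonneg μ Sᶜ]

lemma pr_map (f : α → β) (S : Set β) : pr (μ.map f) S = pr μ (f ⁻¹' S) := by
  rw [pr, pr, PMF.toOuterMeasure_map_apply]

lemma pr_map_eq_one {f : α → β} {S : Set β} (h : ∀ x, f x ∈ S) : pr (μ.map f) S = 1 := by
  rw [pr, (PMF.toOuterMeasure_apply_eq_one_iff _ S).2 fun y _ => ?_, ENNReal.toReal_one]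
  obtain ⟨x, -, rfl⟩ := (PMF.mem_support_map_iff _ _ _).1 ‹_›
  exact h x

variable {f : α → α} {B : Set α}

lemma pr_map_le_pr_inter_add_pr_compl (hf : EqOn f id B) (S : Set α) :
    pr (μ.map f) S ≤ pr μ (S ∩ B) + pr μ Bᶜ := by
  have hB : f ⁻¹' S ∩ B = S ∩ B := by
    rw [inter_comm, hf.inter_preimage_eq, preimage_id, inter_comm]
  rw [pr_map, ← hB]
  exact pr_le_pr_inter_add_pr_compl μ _ B

lemma pr_inter_le_pr_map (hf : EqOn f id B) (S : Set α) : pr μ (S ∩ B) ≤ pr (μ.map f) S := by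
  rw [pr_map, inter_comm, ← preimage_id (s := S), ← hf.inter_preimage_eq]
  exact pr_mono μ inter_subset_right

theorem pr_map_le_pr_map_add {μ ν : PMF α} {g : α → α} {C : Set α} {ε1 ε2 δ : ℝ}
    (hε2 : 0 ≤ ε2) (hf : EqOn f id B) (hg : EqOn g id C)
    (hμ : pr μ Bᶜ ≤ ε1) (hν : pr ν Cᶜ ≤ ε1)
    (hpriv : ∀ T, pr μ T ≤ Real.exp ε2 * pr ν T + δ) (S : Set α) :
    pr (μ.map f) S ≤ pr (ν.map g) S + (δ + 2 * ε1 + (Real.exp ε2 - 1)) := by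
  have hexp : Real.exp ε2 * pr ν (S ∩ B) ≤ pr ν (S ∩ B) + (Real.exp ε2 - 1) := by
    have := Real.one_le_exp hε2
    nlinarith [pr_le_one ν (S ∩ B), pr_nonneg ν (S ∩ B)]
  calc pr (μ.map f) S ≤ pr μ (S ∩ B) + ε1 := by
        linarith [pr_map_le_pr_inter_add_pr_compl μ hf S]
    _ ≤ pr ν (S ∩ B) + (Real.exp ε2 - 1) + δ + ε1 := by linarith [hpriv (S ∩ B)]
    _ ≤ pr ν (S ∩ C) + ε1 + (Real.exp ε2 - 1) + δ + ε1 := by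
        linarith [pr_mono ν (inter_subset_left : S ∩ B ⊆ S), pr_le_pr_inter_add_pr_compl ν S C]
    _ ≤ pr (ν.map g) S + (δ + 2 * ε1 + (Real.exp ε2 - 1)) := by
        linarith [pr_inter_le_pr_map ν hg S]

end Probability

section Clamp

variable {α : Type*} [DecidableEq α] (β : ℕ) (e : Finset α)

def clampToBall (s : Finset α) : Finset α :=
  if setDist s e ≤ β then s else e

lemma clampToBall_eqOn : EqOn (clampToBall β e) id {s | setDist s e ≤ β} :=
  fun _ hs => if_pos hs

lemma setDist_clampToBall_le (s : Finset α) : setDist (clampToBall β e s) e ≤ β := by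
  unfold clampToBall
  split_ifs with h
  · exact h
  · simp [setDist]

lemma card_clampToBall {s : Finset α} {d : ℕ} (hs : s.card = d) (he : e.card = d) :
    (clampToBall β e s).card = d := by
  unfold clampToBall
  split_ifs <;> assumption

end Clamp

theorem stmt_18_general (n d β : ℕ) (ε1 ε2 δ : ℝ)
    (hε2 : 0 ≤ ε2)
    (A : Finset (Fin n) → PMF (Finset (Fin n)))
    (hA : IsDP n d β ε1 ε2 δ A)
    (hsupp : ∀ e : Finset (Fin n), e.card = d → ∀ s ∈ (A e).support, s.card = d)
    (A' : Finset (Fin n) → PMF (Finset (Fin n)))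
    (hA' : ∀ e : Finset (Fin n),
      A' e = (A e).map (fun s => if setDist s e ≤ β then s else e)) :
    IsDP n d β 0 0 (δ + 2 * ε1 + (Real.exp ε2 - 1)) A' ∧
      ∀ e : Finset (Fin n), e.card = d → ∀ s ∈ (A' e).support, s.card = d := by
  obtain ⟨hacc, hpriv⟩ := hA
  have hA'_eq : ∀ e, A' e = (A e).map (clampToBall β e) := hA'
  refine ⟨⟨fun e _ => ?accuracy, fun ei ej hi hj hdist S => ?privacy⟩, fun e he s hs => ?card⟩
  case accuracy =>
    rw [hA'_eq, pr_map_eq_one _ (setDist_clampToBall_le β e)]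
    norm_num
  case privacy =>
    rw [hA'_eq, hA'_eq, Real.exp_zero, one_mul]
    exact pr_map_le_pr_map_add hε2 (clampToBall_eqOn β ei) (clampToBall_eqOn β ej)
      (pr_compl_le _ (hacc ei hi)) (pr_compl_le _ (hacc ej hj)) (hpriv ei ej hi hj hdist) S
  case card =>
    rw [hA'_eq, PMF.support_map] at hs
    obtain ⟨t, ht, rfl⟩ := hs
    exact card_clampToBall β e (hsupp e he t ht) he

theorem stmt_18 (n d β : ℕ) (ε1 ε2 δ : ℝ)
    (hε1 : 0 ≤ ε1) (hε2 : 0 ≤ ε2) (hδ : 0 ≤ δ)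
    (A : Finset (Fin n) → PMF (Finset (Fin n)))
    (hA : IsDP n d β ε1 ε2 δ A)
    (hsupp : ∀ e : Finset (Fin n), e.card = d → ∀ s ∈ (A e).support, s.card = d)
    (A' : Finset (Fin n) → PMF (Finset (Fin n)))
    (hA' : ∀ e : Finset (Fin n),
      A' e = (A e).map (fun s => if setDist s e ≤ β then s else e)) :
    IsDP n d β 0 0 (δ + 2 * ε1 + (Real.exp ε2 - 1)) A' ∧
      ∀ e : Finset (Fin n), e.card = d → ∀ s ∈ (A' e).support, s.card = d :=
  stmt_18_general n d β ε1 ε2 δ hε2 A hA hsupp A' hA'
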